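/- Let A be a standard S4^C_I-algebra, d ∈ A, and for an ultrafilter u define rk_d(u) := min{γ : u ∩ M_d(γ) = ∅} if C d ∉ u, and ∞ otherwise, where M_d(γ) = {a : γ ≤ ht_d(a)}. Let J^γ_d := {u ∈ Ult(A) : γ ≤ rk_d(u)} and let τ_i be the topology on Ult(A) with basis {(□_i b)^ : b ∈ A}. Then for every ordinal γ: ⋂_{i∈I} Int_{τ_i}(d̂) ∩ ⋂_{i∈I} Int_{τ_i}(J^γ_d) ⊆ J^{γ+1}_d. -/
import Mathlib


/-- An `S4CStruct` packages the box operators and the common-knowledge operator. -/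
structure S4CStruct (I : Type*) (A : Type*) [Fintype I] [BooleanAlgebra A] where
  box : I → A → A
  C : A → A

namespace S4CStruct

variable {I A : Type*} [Fintype I] [BooleanAlgebra A]

/-- `E a = ⋀ i, □_i a`. -/
def E (S : S4CStruct I A) (a : A) : A := Finset.univ.inf fun i => S.box i a

/-- The axioms of an `S4^C_I`-algebra. -/
structure IsS4C (S : S4CStruct I A) : Prop where
  box_top : ∀ i, S.box i ⊤ = ⊤
  box_inf : ∀ i a b, S.box i (a ⊓ b) = S.box i a ⊓ S.box i b
  box_idem : ∀ i a, S.box i (S.box i a) = S.box i a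
  box_le : ∀ i a, S.box i a ≤ a
  C_top : S.C ⊤ = ⊤
  C_inf : ∀ a b, S.C (a ⊓ b) = S.C a ⊓ S.C b
  C_idem : ∀ a, S.C (S.C a) = S.C a
  C_le : ∀ a, S.C a ≤ a
  fix : ∀ a, S.C a ≤ S.E a ⊓ S.E (S.C a)
  ind : ∀ a, S.E a ⊓ S.C (a ⇨ S.E a) ≤ S.C a

/-- A standard `S4^C_I`-algebra. -/
def Standard (S : S4CStruct I A) : Prop :=
  ∀ (d : A) (a : ℕ → A), (∀ j, a j ≤ S.E d ⊓ S.E (a (j + 1))) → a 0 ≤ S.C d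

/-- The relation `a ≺_d b  ↔  b ≤ E d ⊓ E a`. -/
def prec (S : S4CStruct I A) (d : A) (a b : A) : Prop := b ≤ S.E d ⊓ S.E a

end S4CStruct

/- Ordinal height in a directed graph, with `⊤` (infinity) for inaccessible elements. -/
open Classical in
noncomputable def graphHt {α : Type*} (r : α → α → Prop) (a : α) : WithTop Ordinal :=
  if h : Acc r a then ((h.rank : Ordinal) : WithTop Ordinal) else ⊤

/-- The intersection of a family of topologies (as families of open sets). -/
def interTop {X I : Type*} (τ : I → TopologicalSpace X) : TopologicalSpace X where
  IsOpen s := ∀ i, (τ i).IsOpen s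
  isOpen_univ := fun i => @isOpen_univ _ (τ i)
  isOpen_inter := fun s t hs ht i => @IsOpen.inter _ (τ i) s t (hs i) (ht i)
  isOpen_sUnion := fun _ hF i => @isOpen_sUnion _ (τ i) _ (fun t htF => hF t htF i)

/-- Interior operator of an explicitly given topology. -/
def topInt {X : Type*} (t : TopologicalSpace X) (Y : Set X) : Set X := @interior X t Y

/-- An ultrafilter of a Boolean algebra. -/
structure BoolUlt (A : Type*) [BooleanAlgebra A] where
  carrier : Set A
  top_mem : ⊤ ∈ carrier
  bot_not_mem : ⊥ ∉ carrier
  inf_mem : ∀ a b, a ∈ carrier → b ∈ carrier → a ⊓ b ∈ carrier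
  mem_of_le : ∀ a b, a ≤ b → a ∈ carrier → b ∈ carrier
  mem_or_compl_mem : ∀ a, a ∈ carrier ∨ aᶜ ∈ carrier

/-- The Stone set `â = {u : ultrafilter | a ∈ u}`. -/
def boolHat {A : Type*} [BooleanAlgebra A] (a : A) : Set (BoolUlt A) :=
  {u | a ∈ u.carrier}

open Classical in
/-- The rank of an ultrafilter with respect to `d`. -/
noncomputable def ultRk {I A : Type*} [Fintype I] [BooleanAlgebra A]
    (S : S4CStruct I A) (d : A) (u : BoolUlt A) : WithTop Ordinal :=
  if S.C d ∈ u.carrier then ⊤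
  else ((sInf {γ : Ordinal |
    ∀ a ∈ u.carrier, ¬ ((γ : WithTop Ordinal) ≤ graphHt (S.prec d) a)} : Ordinal) :
      WithTop Ordinal)

/-- `J^γ_d`. -/
def ultJ {I A : Type*} [Fintype I] [BooleanAlgebra A]
    (S : S4CStruct I A) (d : A) (γ : Ordinal) : Set (BoolUlt A) :=
  {u | (γ : WithTop Ordinal) ≤ ultRk S d u}

section GH
variable {α : Type*} {r : α → α → Prop}

lemma graphHt_eq_top {a : α} (h : ¬ Acc r a) : graphHt r a = ⊤ := by
  unfold graphHt; exact dif_neg h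

lemma graphHt_acc {a : α} (h : Acc r a) : graphHt r a = (h.rank : Ordinal) := by
  unfold graphHt; exact dif_pos h

lemma acc_no_loop {a : α} (h : Acc r a) : ¬ r a a := by
  induction h with
  | intro x _ ih => exact fun hxx => ih x hxx hxx

lemma graphHt_succ_intro {a b : α} (hr : r b a) {β : Ordinal}
    (hb : (β : WithTop Ordinal) ≤ graphHt r b) :
    ((β + 1 : Ordinal) : WithTop Ordinal) ≤ graphHt r a := by
  by_cases ha : Acc r a
  · have hab : Acc r b := ha.inv hr
    rw [graphHt_acc hab] at hb
    rw [graphHt_acc ha]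
    have h1 : hab.rank < ha.rank := Acc.rank_lt_of_rel ha hr
    have h2 : β < ha.rank := lt_of_le_of_lt (WithTop.coe_le_coe.1 hb) h1
    exact WithTop.coe_le_coe.2 (by rw [Ordinal.add_one_eq_succ, Order.succ_le_iff]; exact h2)
  · rw [graphHt_eq_top ha]; exact le_top

lemma graphHt_succ_elim {a : α} {β : Ordinal}
    (h : ((β + 1 : Ordinal) : WithTop Ordinal) ≤ graphHt r a) :
    ∃ b, r b a ∧ (β : WithTop Ordinal) ≤ graphHt r b := by
  by_cases ha : Acc r a
  · rw [graphHt_acc ha] at h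
    have h' : β < ha.rank := by
      have := WithTop.coe_le_coe.1 h
      rwa [Ordinal.add_one_eq_succ, Order.succ_le_iff] at this
    rw [Acc.rank_eq, Ordinal.lt_iSup_iff] at h'
    obtain ⟨⟨b, hb⟩, hlt⟩ := h'
    refine ⟨b, hb, ?_⟩
    rw [graphHt_acc (ha.inv hb)]
    exact WithTop.coe_le_coe.2 (Order.lt_succ_iff.1 hlt)
  · by_contra hc
    push_neg at hc
    refine ha (Acc.intro a fun b hb => ?_)
    by_contra hnb
    have h2 := hc b hb
    rw [graphHt_eq_top hnb] at h2
    exact not_top_lt h2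

lemma graphHt_sup {α' : Type*} [SemilatticeSup α'] {r : α' → α' → Prop}
    (hr : ∀ {c c' e e' : α'}, r c e → r c' e' → r (c ⊔ c') (e ⊔ e')) :
    ∀ β : Ordinal, ∀ e f : α', (β : WithTop Ordinal) ≤ graphHt r e →
      (β : WithTop Ordinal) ≤ graphHt r f → (β : WithTop Ordinal) ≤ graphHt r (e ⊔ f) := by
  intro β
  induction β using Ordinal.induction with
  | h β IH =>
    intro e f he hf
    by_contra hlt
    push_neg at hlt
    obtain ⟨o, ho, hoβ⟩ := WithTop.lt_iff_exists_coe.1 hlt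
    have hoβ' : o < β := WithTop.coe_lt_coe.1 hoβ
    have hsucc : ((o + 1 : Ordinal) : WithTop Ordinal) ≤ (β : WithTop Ordinal) :=
      WithTop.coe_le_coe.2 (by rw [Ordinal.add_one_eq_succ, Order.succ_le_iff]; exact hoβ')
    obtain ⟨c, hc, hcht⟩ := graphHt_succ_elim (hsucc.trans he)
    obtain ⟨c', hc', hcht'⟩ := graphHt_succ_elim (hsucc.trans hf)
    have := graphHt_succ_intro (hr hc hc') (IH o hoβ' c c' hcht hcht')
    rw [ho] at this
    have h2 := WithTop.coe_le_coe.1 this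
    rw [Ordinal.add_one_eq_succ, Order.succ_le_iff] at h2
    exact lt_irrefl o h2

lemma graphHt_finset_sup {α' : Type*} [SemilatticeSup α'] [OrderBot α'] {r : α' → α' → Prop}
    (hr : ∀ {c c' e e' : α'}, r c e → r c' e' → r (c ⊔ c') (e ⊔ e')) (β : Ordinal)
    {κ : Type*} (t : Finset κ) (hne : t.Nonempty) (f : κ → α')
    (h : ∀ x ∈ t, (β : WithTop Ordinal) ≤ graphHt r (f x)) :
    (β : WithTop Ordinal) ≤ graphHt r (t.sup f) := by
  classical
  induction hne using Finset.Nonempty.cons_induction with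
  | singleton a => rw [Finset.sup_singleton]; exact h a (Finset.mem_singleton_self a)
  | cons a s ha hs ih =>
    rw [Finset.sup_cons]
    exact graphHt_sup hr β _ _ (h a (Finset.mem_cons_self a s))
      (ih fun x hx => h x (Finset.mem_cons_of_mem hx))

end GH

section Ult
variable {A : Type*} [BooleanAlgebra A]

lemma finset_subset_chain_union {α : Type*} {c : Set (Set α)} (hchain : IsChain (· ⊆ ·) c)
    (hcne : c.Nonempty) (s : Finset α) (hs : ↑s ⊆ ⋃₀ c) : ∃ G ∈ c, ↑s ⊆ G := by
  classical
  induction s using Finset.induction with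
  | empty => exact ⟨hcne.choose, hcne.choose_spec, by simp⟩
  | @insert a s ha ih =>
    rw [Finset.coe_insert] at hs
    obtain ⟨G₁, hG₁, hsG₁⟩ := ih ((Set.subset_insert _ _).trans hs)
    obtain ⟨G₂, hG₂, haG₂⟩ := hs (Set.mem_insert a _)
    rw [Finset.coe_insert]
    rcases eq_or_ne G₁ G₂ with rfl | hne
    · exact ⟨G₁, hG₁, Set.insert_subset haG₂ hsG₁⟩
    rcases hchain hG₁ hG₂ hne with h | h
    · exact ⟨G₂, hG₂, Set.insert_subset haG₂ (hsG₁.trans h)⟩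
    · exact ⟨G₁, hG₁, Set.insert_subset (h haG₂) hsG₁⟩

lemma exists_ult {F : Set A} (hF : ∀ s : Finset A, ↑s ⊆ F → s.inf id ≠ ⊥) :
    ∃ u : BoolUlt A, F ⊆ u.carrier := by
  classical
  obtain ⟨M, hFM, hMmax⟩ := zorn_subset_nonempty
      {G : Set A | ∀ s : Finset A, (↑s : Set A) ⊆ G → s.inf id ≠ ⊥}
      (fun c hcP hchain hcne => by
        refine ⟨⋃₀ c, fun s hs => ?_, fun G hG => Set.subset_sUnion_of_mem hG⟩
        obtain ⟨G, hGc, hsG⟩ := finset_subset_chain_union hchain hcne s hs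
        exact hcP hGc s hsG) F hF
  have hMP : ∀ s : Finset A, (↑s : Set A) ⊆ M → s.inf id ≠ ⊥ := hMmax.1
  have claim_mem : ∀ a : A, (∀ s : Finset A, ↑s ⊆ M → s.inf id ⊓ a ≠ ⊥) → a ∈ M := by
    intro a hgood
    have hins : insert a M ∈ {G : Set A | ∀ s : Finset A, ↑s ⊆ G → s.inf id ≠ ⊥} := by
      intro s hs hbot
      have hsub : ↑(s.erase a) ⊆ M := by
        intro x hx
        rcases Finset.mem_coe.1 hx with hx'
        have hxs := Finset.mem_of_mem_erase hx'
        have hxa := Finset.ne_of_mem_erase hx'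
        rcases hs (Finset.mem_coe.2 hxs) with h | h
        · exact absurd h hxa
        · exact h
      apply hgood (s.erase a) hsub
      by_cases hmem : a ∈ s
      · rw [inf_comm]
        rw [← Finset.insert_erase hmem, Finset.inf_insert] at hbot
        exact hbot
      · rw [Finset.erase_eq_of_notMem hmem]
        exact le_bot_iff.1 (inf_le_left.trans_eq hbot)
    have := hMmax.2 hins (Set.subset_insert a M)
    exact this (Set.mem_insert a M)
  have hbotM : ⊥ ∉ M := by
    intro h
    exact hMP {⊥} (by simpa using h) (by simp)
  refine ⟨⟨M, ?_, hbotM, ?_, ?_, ?_⟩, hFM⟩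
  · exact claim_mem ⊤ (by intro s hs h; exact hMP s hs (by simpa using h))
  · intro a b ha hb
    apply claim_mem
    intro s hs h
    have hsub : ↑(insert a (insert b s)) ⊆ M := by
      rw [Finset.coe_insert, Finset.coe_insert]
      exact Set.insert_subset ha (Set.insert_subset hb hs)
    apply hMP _ hsub
    rw [Finset.inf_insert, Finset.inf_insert]
    rw [inf_comm, inf_assoc] at h
    simpa using h
  · intro a b hab ha
    apply claim_mem
    intro s hs h
    have hsub : ↑(insert a s) ⊆ M := by
      rw [Finset.coe_insert]; exact Set.insert_subset ha hs
    apply hMP _ hsub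
    rw [Finset.inf_insert]
    refine le_bot_iff.1 ?_
    calc (id a) ⊓ s.inf id ≤ s.inf id ⊓ b := by
          simp only [id]; rw [inf_comm]; exact inf_le_inf_left _ hab
      _ = ⊥ := h
  · intro a
    by_contra hc
    push_neg at hc
    obtain ⟨ha, hac⟩ := hc
    have h1 : ∃ s : Finset A, ↑s ⊆ M ∧ s.inf id ⊓ a = ⊥ := by
      by_contra h; push_neg at h
      exact ha (claim_mem a fun s hs => h s hs)
    have h2 : ∃ s : Finset A, ↑s ⊆ M ∧ s.inf id ⊓ aᶜ = ⊥ := by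
      by_contra h; push_neg at h
      exact hac (claim_mem aᶜ fun s hs => h s hs)
    obtain ⟨s₁, hs₁, hb₁⟩ := h1
    obtain ⟨s₂, hs₂, hb₂⟩ := h2
    apply hMP (s₁ ∪ s₂) (by rw [Finset.coe_union]; exact Set.union_subset hs₁ hs₂)
    rw [Finset.inf_union]
    have e1 : (s₁.inf id ⊓ s₂.inf id) ⊓ a = ⊥ :=
      le_bot_iff.1 ((inf_le_inf_right a (inf_le_left)).trans_eq hb₁)
    have e2 : (s₁.inf id ⊓ s₂.inf id) ⊓ aᶜ = ⊥ :=
      le_bot_iff.1 ((inf_le_inf_right aᶜ (inf_le_right)).trans_eq hb₂)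
    have : s₁.inf id ⊓ s₂.inf id = (s₁.inf id ⊓ s₂.inf id) ⊓ (a ⊔ aᶜ) := by
      rw [sup_compl_eq_top, inf_top_eq]
    rw [this, inf_sup_left, e1, e2, bot_sup_eq]

lemma hat_le {a b : A} (h : boolHat a ⊆ boolHat b) : a ≤ b := by
  by_contra hab
  have h0 : a ⊓ bᶜ ≠ ⊥ := by
    intro h0
    apply hab
    calc a = a ⊓ (b ⊔ bᶜ) := by rw [sup_compl_eq_top, inf_top_eq]
      _ = (a ⊓ b) ⊔ (a ⊓ bᶜ) := inf_sup_left a b bᶜ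
      _ = a ⊓ b := by rw [h0, sup_bot_eq]
      _ ≤ b := inf_le_right
  obtain ⟨u, hu⟩ := exists_ult (F := {a ⊓ bᶜ}) (by
    intro s hs hbot
    apply h0
    refine le_bot_iff.1 (le_trans (Finset.le_inf fun x hx => ?_) hbot.le)
    rw [Set.mem_singleton_iff.1 (hs (Finset.mem_coe.2 hx))]; rfl)
  have hmem : a ⊓ bᶜ ∈ u.carrier := hu rfl
  have hA : a ∈ u.carrier := u.mem_of_le _ _ inf_le_left hmem
  have hB : b ∈ u.carrier := h hA
  have hBc : bᶜ ∈ u.carrier := u.mem_of_le _ _ inf_le_right hmem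
  have : b ⊓ bᶜ ∈ u.carrier := u.inf_mem _ _ hB hBc
  rw [inf_compl_eq_bot] at this
  exact u.bot_not_mem this

lemma compl_finset_inf (s : Finset A) (f : A → A) :
    (s.inf f)ᶜ = s.sup fun x => (f x)ᶜ := by
  classical
  induction s using Finset.induction with
  | empty => simp
  | @insert a s ha ih => rw [Finset.inf_insert, Finset.sup_insert, compl_inf, ih]

lemma hat_compact {a : A} {T : Set A} (h : boolHat a ⊆ ⋃ m ∈ T, boolHat m) :
    ∃ t : Finset A, ↑t ⊆ T ∧ a ≤ t.sup id := by
  classical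
  by_contra hc
  push_neg at hc
  have hfip : ∀ s : Finset A, (↑s : Set A) ⊆ insert a (compl '' T) → s.inf id ≠ ⊥ := by
    intro s hs hbot
    set t : Finset A := (s.erase a).image compl with ht
    have htT : ↑t ⊆ T := by
      intro x hx
      rw [ht, Finset.coe_image] at hx
      obtain ⟨y, hy, rfl⟩ := hx
      have hyF := hs (Finset.mem_coe.2 (Finset.mem_of_mem_erase hy))
      rcases hyF with h' | h'
      · exact absurd h' (Finset.ne_of_mem_erase hy)
      · obtain ⟨m, hm, rfl⟩ := h'
        rwa [compl_compl]
    apply hc t htT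
    have h1 : a ⊓ (s.erase a).inf id = ⊥ := by
      by_cases hmem : a ∈ s
      · rw [← Finset.insert_erase hmem, Finset.inf_insert] at hbot
        exact hbot
      · rw [Finset.erase_eq_of_notMem hmem]
        exact le_bot_iff.1 (inf_le_right.trans_eq hbot)
    have h2 : a ≤ ((s.erase a).inf id)ᶜ :=
      le_compl_iff_disjoint_right.2 (disjoint_iff.2 h1)
    have h3 : ((s.erase a).inf id)ᶜ = t.sup id := by
      rw [ht, Finset.sup_image]
      exact compl_finset_inf _ _
    exact h2.trans_eq h3
  obtain ⟨u, hu⟩ := exists_ult hfip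
  have hA : a ∈ u.carrier := hu (Set.mem_insert a _)
  obtain ⟨m, hmT, hmv⟩ := Set.mem_iUnion₂.1 (h hA)
  have hmc : mᶜ ∈ u.carrier := hu (Set.mem_insert_of_mem _ ⟨m, hmT, rfl⟩)
  have hbotmem : m ⊓ mᶜ ∈ u.carrier := u.inf_mem _ _ hmv hmc
  rw [inf_compl_eq_bot] at hbotmem
  exact u.bot_not_mem hbotmem

lemma finset_inf_mem (u : BoolUlt A) {κ : Type*} (t : Finset κ) (f : κ → A)
    (h : ∀ i ∈ t, f i ∈ u.carrier) : t.inf f ∈ u.carrier := by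
  classical
  induction t using Finset.induction with
  | empty => simpa using u.top_mem
  | @insert a s ha ih =>
    rw [Finset.inf_insert]
    exact u.inf_mem _ _ (h a (Finset.mem_insert_self a s))
      (ih fun i hi => h i (Finset.mem_insert_of_mem hi))

end Ult

section S4CAux

variable {I A : Type*} [Fintype I] [BooleanAlgebra A] {S : S4CStruct I A}

lemma s4c_box_mono (hS : S.IsS4C) (i : I) {a b : A} (h : a ≤ b) :
    S.box i a ≤ S.box i b := by
  have h2 := hS.box_inf i a b
  rw [inf_eq_left.2 h] at h2
  rw [h2]
  exact inf_le_right

lemma s4c_le_E_iff {x a : A} : x ≤ S.E a ↔ ∀ i, x ≤ S.box i a := by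
  unfold S4CStruct.E
  rw [Finset.le_inf_iff]
  exact ⟨fun h i => h i (Finset.mem_univ i), fun h i _ => h i⟩

lemma s4c_E_le_box (i : I) (a : A) : S.E a ≤ S.box i a :=
  s4c_le_E_iff.1 le_rfl i

lemma s4c_E_mono (hS : S.IsS4C) {a b : A} (h : a ≤ b) : S.E a ≤ S.E b :=
  s4c_le_E_iff.2 fun i => (s4c_E_le_box i a).trans (s4c_box_mono hS i h)

lemma s4c_prec_sup (hS : S.IsS4C) {d c c' e e' : A}
    (h : S.prec d c e) (h' : S.prec d c' e') : S.prec d (c ⊔ c') (e ⊔ e') := by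
  have h1 : e ≤ S.E d ⊓ S.E c := h
  have h2 : e' ≤ S.E d ⊓ S.E c' := h'
  show e ⊔ e' ≤ S.E d ⊓ S.E (c ⊔ c')
  exact sup_le (h1.trans (inf_le_inf_left _ (s4c_E_mono hS le_sup_left)))
    (h2.trans (inf_le_inf_left _ (s4c_E_mono hS le_sup_right)))

lemma s4c_le_C_of_not_acc (hstd : S.Standard) {d a : A}
    (h : ¬ Acc (S.prec d) a) : a ≤ S.C d := by
  classical
  have step : ∀ x : A, ¬ Acc (S.prec d) x → ∃ y, ¬ Acc (S.prec d) y ∧ S.prec d y x := by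
    intro x hx
    by_contra hc
    push_neg at hc
    refine hx (Acc.intro x fun y hy => ?_)
    by_contra hny
    exact hc y hny hy
  choose g hg1 hg2 using step
  let f : ℕ → {x : A // ¬ Acc (S.prec d) x} :=
    fun n => Nat.rec ⟨a, h⟩ (fun _ p => ⟨g p.1 p.2, hg1 p.1 p.2⟩) n
  have := hstd d (fun j => (f j).1) (fun j => hg2 (f j).1 (f j).2)
  exact this

lemma s4c_ht_C_top (hS : S.IsS4C) (d : A) : graphHt (S.prec d) (S.C d) = ⊤ := by
  refine graphHt_eq_top fun hacc => ?_
  exact acc_no_loop hacc (show S.prec d (S.C d) (S.C d) from hS.fix d)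

lemma s4c_rk_elim (hS : S.IsS4C) {d : A} {v : BoolUlt A} {γ : Ordinal}
    (hv : (γ : WithTop Ordinal) ≤ ultRk S d v) {β : Ordinal} (hβ : β < γ) :
    ∃ m ∈ v.carrier, (β : WithTop Ordinal) ≤ graphHt (S.prec d) m := by
  unfold ultRk at hv
  by_cases hC : S.C d ∈ v.carrier
  · exact ⟨S.C d, hC, by rw [s4c_ht_C_top hS]; exact le_top⟩
  · rw [if_neg hC] at hv
    have h1 := WithTop.coe_le_coe.1 hv
    by_contra hcon
    push_neg at hcon
    have hmem : β ∈ {γ' : Ordinal |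
        ∀ a ∈ v.carrier, ¬((γ' : WithTop Ordinal) ≤ graphHt (S.prec d) a)} :=
      fun m hm => not_le.2 (hcon m hm)
    exact absurd (h1.trans (csInf_le (OrderBot.bddBelow _) hmem)) (not_le.2 hβ)

lemma s4c_generate_witness (hS : S.IsS4C) (i : I) {t : Set (BoolUlt A)}
    (ht : TopologicalSpace.GenerateOpen {s | ∃ b : A, s = boolHat (S.box i b)} t) :
    ∀ u ∈ t, ∃ b : A, S.box i b ∈ u.carrier ∧ boolHat (S.box i b) ⊆ t := by
  induction ht with
  | basic s hs =>
    obtain ⟨b, rfl⟩ := hs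
    exact fun u hu => ⟨b, hu, subset_rfl⟩
  | univ =>
    intro u _
    exact ⟨⊤, by rw [hS.box_top]; exact u.top_mem, Set.subset_univ _⟩
  | inter s t hs ht ihs iht =>
    intro u hu
    obtain ⟨b, hb, hbs⟩ := ihs u hu.1
    obtain ⟨c, hc, hct⟩ := iht u hu.2
    refine ⟨b ⊓ c, by rw [hS.box_inf]; exact u.inf_mem _ _ hb hc, fun v hv => ?_⟩
    have hv' : S.box i b ⊓ S.box i c ∈ v.carrier := by
      rw [← hS.box_inf]; exact hv
    exact ⟨hbs (v.mem_of_le _ _ inf_le_left hv'), hct (v.mem_of_le _ _ inf_le_right hv')⟩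
  | sUnion K hK ih =>
    intro u hu
    obtain ⟨t0, ht0, hut0⟩ := hu
    obtain ⟨b, hb, hbs⟩ := ih t0 ht0 u hut0
    exact ⟨b, hb, hbs.trans (Set.subset_sUnion_of_mem ht0)⟩

lemma s4c_interior_witness (hS : S.IsS4C) (i : I) {Y : Set (BoolUlt A)} {u : BoolUlt A}
    (hu : u ∈ topInt (TopologicalSpace.generateFrom
      {s | ∃ b : A, s = boolHat (S.box i b)}) Y) :
    ∃ b : A, S.box i b ∈ u.carrier ∧ boolHat (S.box i b) ⊆ Y := by
  letI τ' : TopologicalSpace (BoolUlt A) := TopologicalSpace.generateFrom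
      {s | ∃ b : A, s = boolHat (S.box i b)}
  have hu' : u ∈ @interior (BoolUlt A) τ' Y := hu
  obtain ⟨t, hts, hto, hut⟩ := mem_interior.1 hu'
  obtain ⟨b, hb, hbs⟩ := s4c_generate_witness hS i hto u hut
  exact ⟨b, hb, hbs.trans hts⟩

end S4CAux

theorem J_step {I A : Type*} [Fintype I] [Nonempty I] [BooleanAlgebra A]
    (S : S4CStruct I A) (hS : S.IsS4C) (hstd : S.Standard) (d : A)
    (τ : I → TopologicalSpace (BoolUlt A))
    (hτ : ∀ i, τ i = TopologicalSpace.generateFrom {s | ∃ b : A, s = boolHat (S.box i b)}) :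
    ∀ γ : Ordinal,
      (⋂ i, topInt (τ i) (boolHat d)) ∩ (⋂ i, topInt (τ i) (ultJ S d γ)) ⊆
        ultJ S d (γ + 1) := by
  classical
  intro γ u hu
  obtain ⟨hu1, hu2⟩ := hu
  rw [Set.mem_iInter] at hu1 hu2
  -- extract basic open witnesses
  have hw : ∀ i : I, ∃ x : A, S.box i x ∈ u.carrier ∧
      boolHat (S.box i x) ⊆ boolHat d ∧ boolHat (S.box i x) ⊆ ultJ S d γ := by
    intro i
    have h1 := hu1 i
    have h2 := hu2 i
    rw [hτ i] at h1 h2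
    obtain ⟨b, hb, hbsub⟩ := s4c_interior_witness hS i h1
    obtain ⟨c, hc, hcsub⟩ := s4c_interior_witness hS i h2
    refine ⟨b ⊓ c, by rw [hS.box_inf]; exact u.inf_mem _ _ hb hc, ?_, ?_⟩
    · intro v hv
      have hv' : S.box i b ⊓ S.box i c ∈ v.carrier := by
        rw [← hS.box_inf]; exact hv
      exact hbsub (v.mem_of_le _ _ inf_le_left hv')
    · intro v hv
      have hv' : S.box i b ⊓ S.box i c ∈ v.carrier := by
        rw [← hS.box_inf]; exact hv
      exact hcsub (v.mem_of_le _ _ inf_le_right hv')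
  choose x hx1 hx2 hx3 using hw
  set e : I → A := fun i => S.box i (x i) with he
  set a : A := Finset.univ.inf e with ha
  have hae : ∀ i, a ≤ e i := fun i => Finset.inf_le (Finset.mem_univ i)
  have hamem : a ∈ u.carrier := finset_inf_mem u _ _ fun i _ => hx1 i
  have heid : ∀ i, e i = S.box i (e i) := fun i => (hS.box_idem i (x i)).symm
  have haEd : a ≤ S.E d := by
    refine s4c_le_E_iff.2 fun i => ?_
    calc a ≤ e i := hae i
      _ = S.box i (e i) := heid i
      _ ≤ S.box i d := s4c_box_mono hS i (hat_le (hx2 i))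
  -- the key height estimate
  have hht : (γ : WithTop Ordinal) ≤ graphHt (S.prec d) a := by
    by_contra hlt
    push_neg at hlt
    obtain ⟨o, ho, hoγ⟩ := WithTop.lt_iff_exists_coe.1 hlt
    have hoγ' : o < γ := WithTop.coe_lt_coe.1 hoγ
    have hcov : ∀ i : I, ∃ t : Finset A,
        (↑t : Set A) ⊆ {m | (o : WithTop Ordinal) ≤ graphHt (S.prec d) m} ∧
          e i ≤ t.sup id := by
      intro i
      apply hat_compact
      intro v hv
      obtain ⟨m, hm, hmht⟩ := s4c_rk_elim hS (hx3 i hv) hoγ'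
      exact Set.mem_biUnion hmht hm
    choose t htT hte using hcov
    set q : A := Finset.univ.sup (fun i => (t i).sup id) with hq
    have htne : ∀ i, (t i).Nonempty := by
      intro i
      rcases Finset.eq_empty_or_nonempty (t i) with hn | hn
      · exfalso
        have h' := hte i
        rw [hn, Finset.sup_empty] at h'
        exact u.bot_not_mem (u.mem_of_le _ _ h' (hx1 i))
      · exact hn
    have hqht : (o : WithTop Ordinal) ≤ graphHt (S.prec d) q := by
      refine graphHt_finset_sup (fun hc hc' => s4c_prec_sup hS hc hc') o
        Finset.univ Finset.univ_nonempty _ fun i _ => ?_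
      exact graphHt_finset_sup (fun hc hc' => s4c_prec_sup hS hc hc') o
        (t i) (htne i) id fun m hm => htT i hm
    have hqpred : S.prec d q a := by
      show a ≤ S.E d ⊓ S.E q
      refine le_inf haEd (s4c_le_E_iff.2 fun i => ?_)
      calc a ≤ e i := hae i
        _ = S.box i (e i) := heid i
        _ ≤ S.box i q := s4c_box_mono hS i
            ((hte i).trans (by rw [hq]; exact Finset.le_sup (f := fun j => (t j).sup id) (Finset.mem_univ i)))
    have hfin := graphHt_succ_intro hqpred hqht
    rw [ho] at hfin
    have h2 := WithTop.coe_le_coe.1 hfin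
    rw [Ordinal.add_one_eq_succ, Order.succ_le_iff] at h2
    exact lt_irrefl o h2
  -- conclude about the rank
  show ((γ + 1 : Ordinal) : WithTop Ordinal) ≤ ultRk S d u
  unfold ultRk
  by_cases hC : S.C d ∈ u.carrier
  · rw [if_pos hC]; exact le_top
  · rw [if_neg hC]
    rw [WithTop.coe_le_coe]
    apply le_csInf
    · refine ⟨(⨆ z : A, if hz : Acc (S.prec d) z then hz.rank else 0) + 1, ?_⟩
      intro m hm hle
      have hmacc : Acc (S.prec d) m := by
        by_contra hna
        exact hC (u.mem_of_le _ _ (s4c_le_C_of_not_acc hstd hna) hm)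
      rw [graphHt_acc hmacc] at hle
      have h1 := WithTop.coe_le_coe.1 hle
      have h2 : hmacc.rank ≤ ⨆ z : A, if hz : Acc (S.prec d) z then hz.rank else 0 := by
        have hd : (if hz : Acc (S.prec d) m then hz.rank else 0) = hmacc.rank := dif_pos hmacc
        rw [← hd]
        exact Ordinal.le_iSup _ m
      have h3 := h1.trans h2
      rw [Ordinal.add_one_eq_succ, Order.succ_le_iff] at h3
      exact lt_irrefl _ h3
    · intro γ' hγ'
      by_contra hlt
      push_neg at hlt
      rw [Ordinal.add_one_eq_succ, Order.lt_succ_iff] at hlt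
      exact hγ' a hamem ((WithTop.coe_le_coe.2 hlt).trans hht)
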